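/- arXiv:1608.04752 — 2 statements merged into one kernel-verified Lean document; each statement's English description precedes it below -/
import Mathlib

section
/- Let α ∈ (1,2), M > 0, η ∈ (0,1) and 1/α < a < b < 1 be real numbers with a > 1/α + η, and set δ := 1/α + η. Then there exists a finite constant C₁ ≥ 0 such that for every u ∈ [−M, M] and every v ∈ [a,b], Σ_{j=0}^{∞} 2^{j(1−v)} (3+j)^{δ} Σ_{k ∈ ℤ, |k| 2^{−j} > 2(M+1)} (3+|k|)^{δ} (2 + |2^j u − k|)^{−2} ≤ C₁. -/
open Set

set_option maxHeartbeats 1600000 in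
/-- Uniform bound on the far-index part of the low-resolution block:
`Σ_{j ≥ 0} 2^{j(1-v)} (3+j)^δ Σ_{|k| 2^{-j} > 2(M+1)} (3+|k|)^δ (2+|2^j u - k|)^{-2} ≤ C₁`,
uniformly in `u ∈ [-M,M]` and `v ∈ [a,b]`, where `δ = 1/α + η`. -/
theorem far_index_low_resolution_bound
    (α M η a b : ℝ) (hα₁ : 1 < α) (hα₂ : α < 2) (hM : 0 < M)
    (hη : η ∈ Ioo (0 : ℝ) 1) (ha : 1 / α < a) (hab : a < b) (hb : b < 1)
    (haη : 1 / α + η < a) :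
    ∃ C₁ : ℝ, 0 ≤ C₁ ∧ ∀ u ∈ Icc (-M) M, ∀ v ∈ Icc a b,
      Summable (fun p : ℕ × ℤ =>
        if 2 * (M + 1) < |(p.2 : ℝ)| * 2 ^ (-(p.1 : ℝ)) then
          2 ^ ((p.1 : ℝ) * (1 - v)) * (3 + (p.1 : ℝ)) ^ (1 / α + η) *
            ((3 + |(p.2 : ℝ)|) ^ (1 / α + η) / (2 + |2 ^ ((p.1 : ℝ)) * u - (p.2 : ℝ)|) ^ 2)
        else 0) ∧
      (∑' p : ℕ × ℤ,
        if 2 * (M + 1) < |(p.2 : ℝ)| * 2 ^ (-(p.1 : ℝ)) then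
          2 ^ ((p.1 : ℝ) * (1 - v)) * (3 + (p.1 : ℝ)) ^ (1 / α + η) *
            ((3 + |(p.2 : ℝ)|) ^ (1 / α + η) / (2 + |2 ^ ((p.1 : ℝ)) * u - (p.2 : ℝ)|) ^ 2)
        else 0) ≤ C₁ := by
  obtain ⟨hη0, hη1⟩ := hη
  have hα0 : (0:ℝ) < 1/α := by positivity
  obtain ⟨δ, hδdef⟩ : ∃ δ : ℝ, δ = 1/α + η := ⟨_, rfl⟩
  obtain ⟨ε, hεdef⟩ : ∃ ε : ℝ, ε = (a - δ)/2 := ⟨_, rfl⟩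
  obtain ⟨q, hqdef⟩ : ∃ q : ℝ, q = 1 - a + ε := ⟨_, rfl⟩
  have hδa : δ < a := by rw [hδdef]; exact haη
  have hε0 : 0 < ε := by rw [hεdef]; linarith
  have hδ0 : 0 < δ := by rw [hδdef]; linarith
  have hδ1 : δ < 1 := by linarith
  have hq0 : 0 < q := by rw [hqdef]; linarith
  obtain ⟨r, hrdef⟩ : ∃ r : ℝ, r = 2 ^ (-ε) := ⟨_, rfl⟩
  have hr0 : 0 < r := by rw [hrdef]; positivity
  have hr1 : r < 1 := by
    rw [hrdef]; exact Real.rpow_lt_one_of_one_lt_of_neg one_lt_two (by linarith)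
  obtain ⟨C₂, hC₂def⟩ : ∃ C₂ : ℝ, C₂ = 4 ^ (δ:ℝ) * 4 / 2 ^ (q:ℝ) := ⟨_, rfl⟩
  have hC₂0 : 0 < C₂ := by rw [hC₂def]; positivity
  obtain ⟨f, hfdef⟩ : ∃ f : ℕ → ℝ, f = fun j : ℕ => (3 + (j:ℝ)) * r ^ j := ⟨_, rfl⟩
  obtain ⟨g, hgdef⟩ : ∃ g : ℤ → ℝ, g = fun k : ℤ => C₂ * |(k:ℝ)| ^ (-(1+ε)) := ⟨_, rfl⟩
  have hf0 : ∀ j, 0 ≤ f j := fun j => by rw [hfdef]; positivity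
  have hg0 : ∀ k, 0 ≤ g k := fun k => by rw [hgdef]; positivity
  have hfs : Summable f := by
    have h1 : Summable (fun j : ℕ => (3:ℝ) * r ^ j) :=
      (summable_geometric_of_lt_one hr0.le hr1).mul_left 3
    have h2 : Summable (fun j : ℕ => (j:ℝ) * r ^ j) := by
      simpa using summable_pow_mul_geometric_of_norm_lt_one 1
        (by rwa [Real.norm_eq_abs, abs_of_pos hr0] : ‖r‖ < 1)
    apply (h1.add h2).congr
    intro j; rw [hfdef]; ring
  have hgs : Summable g := by
    rw [hgdef]
    exact (Real.summable_abs_int_rpow (by linarith : (1:ℝ) < 1 + ε)).mul_left C₂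
  have hFs : Summable (fun p : ℕ × ℤ => f p.1 * g p.2) :=
    hfs.mul_of_nonneg hgs hf0 hg0
  refine ⟨∑' p : ℕ × ℤ, f p.1 * g p.2,
    tsum_nonneg (fun p => mul_nonneg (hf0 _) (hg0 _)), ?_⟩
  intro u hu v hv
  have hu' : |u| ≤ M := abs_le.mpr ⟨hu.1, hu.2⟩
  have hva : a ≤ v := hv.1
  have key : ∀ p : ℕ × ℤ,
      (if 2 * (M + 1) < |(p.2 : ℝ)| * 2 ^ (-(p.1 : ℝ)) then
          2 ^ ((p.1 : ℝ) * (1 - v)) * (3 + (p.1 : ℝ)) ^ (1 / α + η) *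
            ((3 + |(p.2 : ℝ)|) ^ (1 / α + η) / (2 + |2 ^ ((p.1 : ℝ)) * u - (p.2 : ℝ)|) ^ 2)
        else 0) ≤ f p.1 * g p.2 := by
    rintro ⟨j, k⟩
    dsimp only
    split_ifs with h
    swap
    · exact mul_nonneg (hf0 _) (hg0 _)
    have h2j : (0:ℝ) < 2 ^ (j:ℝ) := by positivity
    have h2j1 : (1:ℝ) ≤ 2 ^ (j:ℝ) := Real.one_le_rpow one_le_two (Nat.cast_nonneg j)
    have hk : 2 * (M + 1) * 2 ^ (j:ℝ) < |(k:ℝ)| := by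
      rw [Real.rpow_neg (by norm_num), ← div_eq_mul_inv, lt_div_iff₀ h2j] at h
      exact h
    have hk2 : 2 < |(k:ℝ)| := by
      have h5 : 2 * (M + 1) ≤ 2 * (M + 1) * 2 ^ (j:ℝ) :=
        le_mul_of_one_le_right (by linarith) h2j1
      linarith
    have hk0 : 0 < |(k:ℝ)| := by linarith
    have hk1 : 1 ≤ |(k:ℝ)| / 2 := by linarith
    obtain ⟨x, hxdef⟩ : ∃ x : ℝ, x = |(k:ℝ)| := ⟨_, rfl⟩
    obtain ⟨D, hDdef⟩ : ∃ D : ℝ, D = |2 ^ ((j:ℝ)) * u - (k:ℝ)| := ⟨_, rfl⟩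
    rw [← hxdef] at hk hk2 hk0 hk1
    have hD : x / 2 ≤ D := by
      have h1 : |2 ^ ((j:ℝ)) * u| ≤ 2 ^ ((j:ℝ)) * M := by
        rw [abs_mul, abs_of_pos h2j]
        exact mul_le_mul_of_nonneg_left hu' h2j.le
      have h2 : x - |2 ^ ((j:ℝ)) * u| ≤ D := by
        have h4 := abs_sub_abs_le_abs_sub (k:ℝ) (2 ^ ((j:ℝ)) * u)
        rw [abs_sub_comm, ← hDdef, ← hxdef] at h4
        linarith
      have h3 : 2 * M * 2 ^ ((j:ℝ)) ≤ 2 * (M + 1) * 2 ^ ((j:ℝ)) :=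
        mul_le_mul_of_nonneg_right (by linarith) h2j.le
      linarith
    have hD0 : 0 ≤ D := by rw [hDdef]; exact abs_nonneg _
    have b1 : (3 + (j:ℝ)) ^ (1/α + η) ≤ 3 + (j:ℝ) := by
      have h7 : (3 + (j:ℝ)) ^ (1/α + η) ≤ (3 + (j:ℝ)) ^ (1:ℝ) :=
        Real.rpow_le_rpow_of_exponent_le
          (by have : (0:ℝ) ≤ (j:ℝ) := Nat.cast_nonneg j; linarith)
          (by rw [← hδdef]; linarith)
      simpa using h7
    have b2 : (2:ℝ) ^ ((j:ℝ) * (1 - v)) ≤ r ^ j * (x/2) ^ (q:ℝ) := by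
      have e1 : (2:ℝ) ^ ((j:ℝ) * (1 - v)) = 2 ^ (-((j:ℝ)*ε)) * 2 ^ ((j:ℝ) * (1 - v + ε)) := by
        rw [← Real.rpow_add two_pos]; ring_nf
      have e2 : (2:ℝ) ^ (-((j:ℝ)*ε)) = r ^ j := by
        rw [hrdef, ← Real.rpow_natCast ((2:ℝ) ^ (-ε)) j, ← Real.rpow_mul (by norm_num)]
        ring_nf
      have b3 : (2:ℝ) ^ ((j:ℝ) * (1 - v + ε)) ≤ (x/2) ^ (q:ℝ) := by
        have e3 : (2:ℝ) ^ ((j:ℝ) * (1 - v + ε)) = ((2:ℝ) ^ ((j:ℝ))) ^ (1 - v + ε) := by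
          rw [← Real.rpow_mul (by norm_num)]
        rw [e3]
        have h2jx : (2:ℝ) ^ ((j:ℝ)) ≤ x / 2 := by
          have h6 : 0 < M * 2 ^ ((j:ℝ)) := mul_pos hM h2j
          nlinarith
        calc ((2:ℝ) ^ ((j:ℝ))) ^ (1 - v + ε) ≤ (x/2) ^ (1 - v + ε) :=
              Real.rpow_le_rpow h2j.le h2jx (by linarith [hv.2])
          _ ≤ (x/2) ^ (q:ℝ) :=
              Real.rpow_le_rpow_of_exponent_le hk1 (by rw [hqdef]; linarith)
      calc (2:ℝ) ^ ((j:ℝ) * (1 - v)) = 2 ^ (-((j:ℝ)*ε)) * 2 ^ ((j:ℝ) * (1 - v + ε)) := e1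
        _ ≤ r ^ j * (x/2) ^ (q:ℝ) := by
            rw [e2]; exact mul_le_mul_of_nonneg_left b3 (by positivity)
    have b4 : (3 + x) ^ (1/α + η) ≤ 4 ^ (δ:ℝ) * x ^ (δ:ℝ) := by
      have h8 : (3 + x) ^ (δ:ℝ) ≤ ((4*x):ℝ) ^ (δ:ℝ) :=
        Real.rpow_le_rpow (by linarith) (by linarith) hδ0.le
      rw [Real.mul_rpow (by norm_num : (0:ℝ) ≤ 4) hk0.le] at h8
      rw [← hδdef]
      exact h8
    have b5 : ((x/2)^2 : ℝ) ≤ (2 + D) ^ 2 := by nlinarith [hD, hD0, hk1]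
    have hx2pos : (0:ℝ) < (x/2)^2 := by positivity
    have bB : (3 + x) ^ (1/α + η) / (2 + D) ^ 2 ≤ 4 ^ (δ:ℝ) * x ^ (δ:ℝ) / (x/2)^2 :=
      div_le_div₀ (by positivity) b4 hx2pos b5
    have final : r ^ j * (x/2) ^ (q:ℝ) * (3 + (j:ℝ)) * (4 ^ (δ:ℝ) * x ^ (δ:ℝ) / (x/2)^2)
        = f j * g k := by
      have e4 : (x/2) ^ (q:ℝ) = x ^ (q:ℝ) / 2 ^ (q:ℝ) :=
        Real.div_rpow hk0.le (by norm_num : (0:ℝ) ≤ 2) q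
      have e5 : ((x/2)^2 : ℝ) = x ^ ((2:ℝ)) / 4 := by
        rw [Real.rpow_two]
        ring
      have e6 : x ^ (q:ℝ) * x ^ (δ:ℝ) / x ^ ((2:ℝ)) = x ^ (-(1+ε)) := by
        rw [← Real.rpow_add hk0, ← Real.rpow_sub hk0]
        congr 1
        rw [hqdef, hεdef]; ring
      rw [hfdef, hgdef]
      dsimp only
      rw [← hxdef, e4, e5, hC₂def, ← e6]
      have h2q : (0:ℝ) < 2 ^ (q:ℝ) := by positivity
      have hxr : (0:ℝ) < x ^ ((2:ℝ)) := Real.rpow_pos_of_pos hk0 _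
      field_simp
    rw [← hxdef, ← hDdef]
    calc 2 ^ ((j:ℝ) * (1 - v)) * (3 + (j:ℝ)) ^ (1 / α + η) *
          ((3 + x) ^ (1 / α + η) / (2 + D) ^ 2)
        ≤ (r ^ j * (x/2) ^ (q:ℝ)) * (3 + (j:ℝ)) * (4 ^ (δ:ℝ) * x ^ (δ:ℝ) / (x/2)^2) := by
          have h1 : 2 ^ ((j:ℝ) * (1 - v)) * (3 + (j:ℝ)) ^ (1 / α + η)
              ≤ (r ^ j * (x/2) ^ (q:ℝ)) * (3 + (j:ℝ)) :=
            mul_le_mul b2 b1 (by positivity)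
              (by positivity)
          exact mul_le_mul h1 bB (by positivity) (by positivity)
      _ = f j * g k := final
  have hnn : ∀ p : ℕ × ℤ, 0 ≤
      (if 2 * (M + 1) < |(p.2 : ℝ)| * 2 ^ (-(p.1 : ℝ)) then
          2 ^ ((p.1 : ℝ) * (1 - v)) * (3 + (p.1 : ℝ)) ^ (1 / α + η) *
            ((3 + |(p.2 : ℝ)|) ^ (1 / α + η) / (2 + |2 ^ ((p.1 : ℝ)) * u - (p.2 : ℝ)|) ^ 2)
        else 0) := by
    intro p; split_ifs with h
    · positivity
    · exact le_rfl
  have hsum : Summable (fun p : ℕ × ℤ =>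
      if 2 * (M + 1) < |(p.2 : ℝ)| * 2 ^ (-(p.1 : ℝ)) then
        2 ^ ((p.1 : ℝ) * (1 - v)) * (3 + (p.1 : ℝ)) ^ (1 / α + η) *
          ((3 + |(p.2 : ℝ)|) ^ (1 / α + η) / (2 + |2 ^ ((p.1 : ℝ)) * u - (p.2 : ℝ)|) ^ 2)
      else 0) := hFs.of_nonneg_of_le hnn key
  exact ⟨hsum, Summable.tsum_le_tsum key hsum hFs⟩
end

section
/- Let α ∈ (1,2), M > 0, η > 0 and 1/α < a < b < 1 be real numbers with η < min(1, a − 1/α). Let (ε_{j,k})_{(j,k) ∈ ℕ × ℤ} be real numbers and C, C′ ≥ 0 be constants such that: (i) |ε_{j,k}| ≤ C (3+j)^{1/α+η} (3+|k|)^{1/α+η} for all (j,k) ∈ ℕ × ℤ; (ii) |ε_{j,k}| ≤ C′ 2^{j/α} for all (j,k) ∈ ℕ × ℤ with |k| 2^{−j} ≤ 2(M+1). Let Φ : ℝ × [a,b] → ℝ be such that for every v ∈ [a,b] the map x ↦ Φ(x,v) is differentiable and sup_{(x,v) ∈ ℝ × [a,b]} (3+|x|)² ( |Φ(x,v)| +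 |∂_x Φ(x,v)| ) < ∞. Then for every (u,v) ∈ [−M,M] × [a,b] the double series Ẍ(u,v) := Σ_{j=0}^{∞} Σ_{k ∈ ℤ} 2^{−jv} ε_{j,k} ( Φ(2^j u − k, v) − Φ(−k, v) ) converges absolutely, and there exists a finite constant C₆ ≥ 0 such that for all u₁, u₂ ∈ [−M, M] and v ∈ [a,b], |Ẍ(u₁,v) − Ẍ(u₂,v)| ≤ C₆ |u₁ − u₂|^{v − 1/α}. -/
open Set

set_option maxHeartbeats 1000000

section HighFreqAux




lemma aux_summable_int_rpow {s : ℝ} (hs : 1 < s) {c : ℝ} (hc : 1 ≤ c) :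
    Summable (fun k : ℤ => 1 / (c + |(k : ℝ)|) ^ s) := by
  have hbase : Summable (fun k : ℤ => 1 / |(k : ℝ) + 1/2| ^ s) :=
    (Real.summable_one_div_int_add_rpow (1/2) s).2 hs
  refine Summable.of_nonneg_of_le (fun k => by positivity) (fun k => ?_) hbase
  have hk0 : (0:ℝ) < |(k : ℝ) + 1/2| := by
    rw [abs_pos]
    intro h
    have h' : (2 * k : ℝ) = -1 := by linarith
    have h'' : (2 * k : ℤ) = -1 := by exact_mod_cast h'
    omega
  have h1 : |(k : ℝ) + 1/2| ≤ c + |(k : ℝ)| := by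
    calc |(k : ℝ) + 1/2| ≤ |(k : ℝ)| + |(1/2 : ℝ)| := abs_add_le _ _
    _ ≤ c + |(k : ℝ)| := by
        rw [abs_of_pos (by norm_num : (0:ℝ) < 1/2)]; linarith [abs_nonneg ((k:ℝ))]
  gcongr

lemma aux_base_summable : Summable (fun m : ℤ => 1 / ((1 : ℝ) + |(m : ℝ)|) ^ 2) := by
  have := aux_summable_int_rpow (s := 2) (c := 1) one_lt_two le_rfl
  refine this.congr fun m => ?_
  rw [Real.rpow_two]

lemma aux_shifted_summable (n : ℤ) :
    Summable (fun k : ℤ => 1 / ((1 : ℝ) + |((k - n : ℤ) : ℝ)|) ^ 2) := by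
  have h := (Equiv.subRight n).summable_iff
    (f := fun m : ℤ => 1 / ((1 : ℝ) + |(m : ℝ)|) ^ 2)
  exact h.2 aux_base_summable

lemma aux_shifted_tsum (n : ℤ) :
    ∑' k : ℤ, 1 / ((1 : ℝ) + |((k - n : ℤ) : ℝ)|) ^ 2
      = ∑' m : ℤ, 1 / ((1 : ℝ) + |(m : ℝ)|) ^ 2 :=
  (Equiv.subRight n).tsum_eq (fun m => 1 / ((1:ℝ) + |(m : ℝ)|) ^ 2)

lemma aux_shift_le (y : ℝ) (k : ℤ) :
    1 / ((2:ℝ) + |y - (k : ℝ)|) ^ 2 ≤ 1 / ((1:ℝ) + |((k - round y : ℤ) : ℝ)|) ^ 2 := by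
  have h1 : |y - (round y : ℝ)| ≤ 1/2 := abs_sub_round y
  have h2 : |((k - round y : ℤ) : ℝ)| ≤ 1 + |y - (k : ℝ)| := by
    push_cast
    calc |(k : ℝ) - round y| = |(k - y) + (y - round y)| := by ring_nf
    _ ≤ |(k : ℝ) - y| + |y - (round y : ℝ)| := abs_add_le _ _
    _ ≤ |y - (k:ℝ)| + 1/2 := by rw [abs_sub_comm]; linarith
    _ ≤ 1 + |y - (k : ℝ)| := by linarith
  apply one_div_le_one_div_of_le (by positivity)
  apply pow_le_pow_left₀ (by positivity)
  linarith

lemma aux_shift_summable (y : ℝ) :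
    Summable (fun k : ℤ => 1 / ((2:ℝ) + |y - (k : ℝ)|) ^ 2) :=
  Summable.of_nonneg_of_le (fun k => by positivity) (aux_shift_le y)
    (aux_shifted_summable (round y))

lemma aux_shift_tsum_le (y : ℝ) :
    ∑' k : ℤ, 1 / ((2:ℝ) + |y - (k : ℝ)|) ^ 2 ≤ ∑' m : ℤ, 1 / ((1:ℝ) + |(m : ℝ)|) ^ 2 := by
  calc ∑' k : ℤ, 1 / ((2:ℝ) + |y - (k : ℝ)|) ^ 2
      ≤ ∑' k : ℤ, 1 / ((1:ℝ) + |((k - round y : ℤ) : ℝ)|) ^ 2 :=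
        Summable.tsum_le_tsum (aux_shift_le y) (aux_shift_summable y) (aux_shifted_summable (round y))
    _ = ∑' m : ℤ, 1 / ((1:ℝ) + |(m : ℝ)|) ^ 2 := aux_shifted_tsum (round y)

lemma aux_poly_le (j : ℕ) : (3:ℝ) + j ≤ 3 * Real.sqrt 2 ^ j := by
  have hs : (1.4 : ℝ) ≤ Real.sqrt 2 := by
    nlinarith [Real.sq_sqrt (by norm_num : (0:ℝ) ≤ 2), Real.sqrt_nonneg 2]
  induction j with
  | zero => norm_num
  | succ n ih =>
    have h2 : 3 * Real.sqrt 2 ^ (n+1) = (3 * Real.sqrt 2 ^ n) * Real.sqrt 2 := by ring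
    push_cast
    rw [h2]
    nlinarith [Nat.cast_nonneg (α := ℝ) n]

lemma aux_rpow_pow (r : ℝ) (j : ℕ) : ((2:ℝ) ^ r) ^ j = (2:ℝ) ^ ((j:ℝ) * r) := by
  rw [← Real.rpow_natCast ((2:ℝ) ^ r) j, ← Real.rpow_mul (by norm_num), mul_comm]

lemma aux_poly_le' {α : ℝ} (hα0 : 0 < α) (hα : α < 2) (j : ℕ) :
    (3:ℝ) + j ≤ 3 * (2:ℝ) ^ ((j:ℝ) / α) := by
  have h1 : (3:ℝ) + j ≤ 3 * Real.sqrt 2 ^ j := aux_poly_le j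
  have h2 : Real.sqrt 2 = (2:ℝ) ^ ((1:ℝ)/2) := by
    rw [Real.sqrt_eq_rpow]
  have h3 : Real.sqrt 2 ^ j = (2:ℝ) ^ ((j:ℝ) * ((1:ℝ)/2)) := by rw [h2, aux_rpow_pow]
  have h4 : (2:ℝ) ^ ((j:ℝ) * ((1:ℝ)/2)) ≤ (2:ℝ) ^ ((j:ℝ) / α) := by
    apply Real.rpow_le_rpow_of_exponent_le one_le_two
    rw [mul_one_div]
    gcongr
  calc (3:ℝ) + j ≤ 3 * Real.sqrt 2 ^ j := h1
  _ = 3 * (2:ℝ) ^ ((j:ℝ) * ((1:ℝ)/2)) := by rw [h3]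
  _ ≤ 3 * (2:ℝ) ^ ((j:ℝ) / α) := by linarith




-- x^δ/x^2 = x^(δ-2)
lemma aux_delta_combine {δ x : ℝ} (hx : (0:ℝ) < x) :
    x ^ δ * (1 / x ^ 2) = 1 / x ^ (2 - δ) := by
  rw [Real.rpow_sub hx, one_div_div, Real.rpow_two]
  ring

lemma aux_geom_cone {M : ℝ} (hM : 0 < M) {u : ℝ} (hu : |u| ≤ M) (j : ℕ) (k : ℤ)
    (hk : ¬(|(k:ℝ)| * 2 ^ (-(j:ℝ)) ≤ 2 * (M+1))) :
    ((3:ℝ) + |(k:ℝ)|) / 2 ≤ 2 + |2 ^ ((j:ℝ)) * u - (k:ℝ)| := by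
  push_neg at hk
  have hPj : (0:ℝ) < 2 ^ ((j:ℝ)) := Real.rpow_pos_of_pos two_pos _
  have h2j : (2:ℝ) ^ (-(j:ℝ)) = (2 ^ ((j:ℝ)))⁻¹ := by
    rw [Real.rpow_neg (by norm_num : (0:ℝ) ≤ 2)]
  rw [h2j, ← div_eq_mul_inv, lt_div_iff₀ hPj] at hk
  -- hk : 2 * (M+1) * 2^j < |k|
  have hub : |2 ^ ((j:ℝ)) * u| ≤ 2 ^ ((j:ℝ)) * M := by
    rw [abs_mul, abs_of_pos hPj]
    exact mul_le_mul_of_nonneg_left hu hPj.le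
  have h5 : |(k:ℝ)| - |2 ^ ((j:ℝ)) * u| ≤ |2 ^ ((j:ℝ)) * u - (k:ℝ)| := by
    rw [abs_sub_comm]
    exact abs_sub_abs_le_abs_sub _ _
  nlinarith [abs_nonneg ((k:ℝ))]

-- combined ε bound outside the cone
lemma aux_eps_noncone {αr C δ : ℝ} {ε : ℕ → ℤ → ℝ} (hα0 : 0 < αr) (hα₂ : αr < 2)
    (hC : 0 ≤ C) (hδ0 : 0 < δ) (hδ1 : δ < 1)
    (hpoly : ∀ (j : ℕ) (k : ℤ), |ε j k| ≤ C * (3 + (j:ℝ)) ^ δ * (3 + |(k:ℝ)|) ^ δ)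
    (j : ℕ) (k : ℤ) :
    |ε j k| ≤ 3 * C * 2 ^ ((j:ℝ)/αr) * (3 + |(k:ℝ)|) ^ δ := by
  have h1 : (3 + (j:ℝ)) ^ δ ≤ 3 + (j:ℝ) := by
    calc (3 + (j:ℝ)) ^ δ ≤ (3 + (j:ℝ)) ^ (1:ℝ) := by
          apply Real.rpow_le_rpow_of_exponent_le _ hδ1.le
          have := Nat.cast_nonneg (α := ℝ) j; linarith
    _ = 3 + (j:ℝ) := Real.rpow_one _
  have h2 : (0:ℝ) ≤ (3 + |(k:ℝ)|) ^ δ := Real.rpow_nonneg (by positivity) _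
  calc |ε j k| ≤ C * (3 + (j:ℝ)) ^ δ * (3 + |(k:ℝ)|) ^ δ := hpoly j k
  _ ≤ C * (3 * 2 ^ ((j:ℝ)/αr)) * (3 + |(k:ℝ)|) ^ δ := by
      have := aux_poly_le' hα0 hα₂ j
      have h3 := h1.trans this
      gcongr
  _ = 3 * C * 2 ^ ((j:ℝ)/αr) * (3 + |(k:ℝ)|) ^ δ := by ring



-- simple: c/(3+|x|)^2 ≤ c/t^2 when 0 < t ≤ 3+|x|
lemma aux_mono {c t x : ℝ} (hc : 0 ≤ c) (ht : 0 < t) (hle : t ≤ 3 + |x|) :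
    c / (3 + |x|) ^ 2 ≤ c / t ^ 2 :=
  div_le_div_of_nonneg_left hc (pow_pos ht 2) (pow_le_pow_left₀ ht.le hle 2)

/-- Plain per-term majorant. -/
lemma aux_term_maj {αr M δ C C' c : ℝ} {ε : ℕ → ℤ → ℝ} {Φ : ℝ → ℝ → ℝ} {v : ℝ}
    (hα0 : 0 < αr) (hα₂ : αr < 2) (hM : 0 < M) (hδ0 : 0 < δ) (hδ1 : δ < 1)
    (hC : 0 ≤ C) (hC' : 0 ≤ C') (hc0 : 0 ≤ c)
    (hpoly : ∀ (j : ℕ) (k : ℤ), |ε j k| ≤ C * (3 + (j:ℝ)) ^ δ * (3 + |(k:ℝ)|) ^ δ)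
    (hsharp : ∀ (j : ℕ) (k : ℤ), |(k:ℝ)| * 2 ^ (-(j:ℝ)) ≤ 2 * (M+1) →
      |ε j k| ≤ C' * 2 ^ ((j:ℝ)/αr))
    (hΦb : ∀ x : ℝ, |Φ x v| ≤ c / (3 + |x|) ^ 2)
    {u : ℝ} (hu : |u| ≤ M) (j : ℕ) (k : ℤ) :
    |ε j k| * (|Φ (2 ^ ((j:ℝ)) * u - (k:ℝ)) v| + |Φ (-(k:ℝ)) v|) ≤
      2 ^ ((j:ℝ)/αr) *
        (C' * c * (1 / ((2:ℝ) + |2 ^ ((j:ℝ)) * u - (k:ℝ)|) ^ 2)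
          + C' * c * (1 / ((2:ℝ) + |(0:ℝ) - (k:ℝ)|) ^ 2)
          + 15 * c * C * (1 / ((3:ℝ) + |(k:ℝ)|) ^ (2 - δ))) := by
  have hk3 : (0:ℝ) < 3 + |(k:ℝ)| := by positivity
  have hPj : (0:ℝ) < 2 ^ ((j:ℝ)/αr) := Real.rpow_pos_of_pos two_pos _
  have h0k : |(0:ℝ) - (k:ℝ)| = |(k:ℝ)| := by rw [zero_sub, abs_neg]
  have hT : (0:ℝ) ≤ 1 / ((3:ℝ) + |(k:ℝ)|) ^ (2 - δ) := by positivity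
  have hg1 : (0:ℝ) ≤ 1 / ((2:ℝ) + |2 ^ ((j:ℝ)) * u - (k:ℝ)|) ^ 2 := by positivity
  have hg2 : (0:ℝ) ≤ 1 / ((2:ℝ) + |(0:ℝ) - (k:ℝ)|) ^ 2 := by positivity
  by_cases hk : |(k:ℝ)| * 2 ^ (-(j:ℝ)) ≤ 2 * (M+1)
  · -- cone: use sharpened bound
    have hε := hsharp j k hk
    have hb1 : |Φ (2 ^ ((j:ℝ)) * u - (k:ℝ)) v| ≤ c / ((2:ℝ) + |2 ^ ((j:ℝ)) * u - (k:ℝ)|) ^ 2 :=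
      (hΦb _).trans (aux_mono hc0 (by positivity) (by linarith [abs_nonneg (2 ^ ((j:ℝ)) * u - (k:ℝ))]))
    have hb2 : |Φ (-(k:ℝ)) v| ≤ c / ((2:ℝ) + |(0:ℝ) - (k:ℝ)|) ^ 2 := by
      refine (hΦb _).trans ?_
      rw [h0k, abs_neg]
      exact aux_mono hc0 (by positivity) (by linarith [abs_nonneg ((k:ℝ))])
    calc |ε j k| * (|Φ (2 ^ ((j:ℝ)) * u - (k:ℝ)) v| + |Φ (-(k:ℝ)) v|)
        ≤ (C' * 2 ^ ((j:ℝ)/αr)) * (c / ((2:ℝ) + |2 ^ ((j:ℝ)) * u - (k:ℝ)|) ^ 2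
            + c / ((2:ℝ) + |(0:ℝ) - (k:ℝ)|) ^ 2) := by
          apply mul_le_mul hε (by linarith) (by positivity)
          positivity
    _ = 2 ^ ((j:ℝ)/αr) * (C' * c * (1 / ((2:ℝ) + |2 ^ ((j:ℝ)) * u - (k:ℝ)|) ^ 2)
          + C' * c * (1 / ((2:ℝ) + |(0:ℝ) - (k:ℝ)|) ^ 2)) := by ring
    _ ≤ _ := by
        have : (0:ℝ) ≤ 2 ^ ((j:ℝ)/αr) * (15 * c * C * (1 / ((3:ℝ) + |(k:ℝ)|) ^ (2 - δ))) := by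
          positivity
        nlinarith [hPj]
  · -- outside the cone
    have hε := aux_eps_noncone hα0 hα₂ hC hδ0 hδ1 hpoly j k
    have hgeo := aux_geom_cone hM hu j k hk
    have hb1 : |Φ (2 ^ ((j:ℝ)) * u - (k:ℝ)) v| ≤ c / (((3:ℝ) + |(k:ℝ)|) / 2) ^ 2 := by
      refine (hΦb _).trans (aux_mono hc0 (by positivity) ?_)
      linarith
    have hb1' : c / (((3:ℝ) + |(k:ℝ)|) / 2) ^ 2 = 4 * c * (1 / ((3:ℝ) + |(k:ℝ)|) ^ 2) := by
      field_simp
      ring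
    have hb2 : |Φ (-(k:ℝ)) v| ≤ c * (1 / ((3:ℝ) + |(k:ℝ)|) ^ 2) := by
      refine (hΦb _).trans ?_
      rw [abs_neg, mul_one_div]
    have hsum : |Φ (2 ^ ((j:ℝ)) * u - (k:ℝ)) v| + |Φ (-(k:ℝ)) v|
        ≤ 5 * c * (1 / ((3:ℝ) + |(k:ℝ)|) ^ 2) := by
      rw [hb1'] at hb1
      linarith
    calc |ε j k| * (|Φ (2 ^ ((j:ℝ)) * u - (k:ℝ)) v| + |Φ (-(k:ℝ)) v|)
        ≤ (3 * C * 2 ^ ((j:ℝ)/αr) * (3 + |(k:ℝ)|) ^ δ) * (5 * c * (1 / ((3:ℝ) + |(k:ℝ)|) ^ 2)) := by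
          apply mul_le_mul hε hsum (by positivity)
          positivity
    _ = 2 ^ ((j:ℝ)/αr) * (15 * c * C * ((3 + |(k:ℝ)|) ^ δ * (1 / ((3:ℝ) + |(k:ℝ)|) ^ 2))) := by
          ring
    _ = 2 ^ ((j:ℝ)/αr) * (15 * c * C * (1 / ((3:ℝ) + |(k:ℝ)|) ^ (2 - δ))) := by
          rw [aux_delta_combine hk3]
    _ ≤ _ := by
        have h1 : (0:ℝ) ≤ 2 ^ ((j:ℝ)/αr) * (C' * c * (1 / ((2:ℝ) + |2 ^ ((j:ℝ)) * u - (k:ℝ)|) ^ 2)) := by positivity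
        have h2 : (0:ℝ) ≤ 2 ^ ((j:ℝ)/αr) * (C' * c * (1 / ((2:ℝ) + |(0:ℝ) - (k:ℝ)|) ^ 2)) := by positivity
        nlinarith



/-- Mean value theorem step: `|Φ(x₁,v) - Φ(x₂,v)| ≤ (c/(2+|x₁|)²)·|x₁-x₂|` when `|x₁-x₂| ≤ 1`. -/
lemma aux_mvt {Φ : ℝ → ℝ → ℝ} {v c : ℝ} (hc0 : 0 ≤ c)
    (hdiff : ∀ x : ℝ, DifferentiableAt ℝ (fun x' => Φ x' v) x)
    (hΦd : ∀ x : ℝ, |deriv (fun x' => Φ x' v) x| ≤ c / (3 + |x|) ^ 2)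
    {x₁ x₂ : ℝ} (hx : |x₁ - x₂| ≤ 1) :
    |Φ x₁ v - Φ x₂ v| ≤ c / ((2:ℝ) + |x₁|) ^ 2 * |x₁ - x₂| := by
  have hconv : Convex ℝ (Icc (min x₁ x₂) (max x₁ x₂)) := convex_Icc _ _
  have hx₁ : x₁ ∈ Icc (min x₁ x₂) (max x₁ x₂) := ⟨min_le_left _ _, le_max_left _ _⟩
  have hx₂ : x₂ ∈ Icc (min x₁ x₂) (max x₁ x₂) := ⟨min_le_right _ _, le_max_right _ _⟩
  have hbound : ∀ x ∈ Icc (min x₁ x₂) (max x₁ x₂),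
      ‖deriv (fun x' => Φ x' v) x‖ ≤ c / ((2:ℝ) + |x₁|) ^ 2 := by
    intro x hxm
    have h1 : |x - x₁| ≤ |x₁ - x₂| := by
      rw [abs_sub_le_iff]
      constructor
      · cases le_total x₁ x₂ with
        | inl h => rw [abs_of_nonpos (by linarith)]; have := hxm.2; simp [max_eq_right h] at this; linarith
        | inr h => rw [abs_of_nonneg (by linarith)]; have := hxm.2; simp [max_eq_left h] at this; linarith
      · cases le_total x₁ x₂ with
        | inl h => rw [abs_of_nonpos (by linarith)]; have := hxm.1; simp [min_eq_left h] at this; linarith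
        | inr h => rw [abs_of_nonneg (by linarith)]; have := hxm.1; simp [min_eq_right h] at this; linarith
    have h2 : |x₁| - |x| ≤ 1 := by
      have := abs_sub_abs_le_abs_sub x₁ x
      rw [abs_sub_comm] at h1
      linarith
    have h3 : (2:ℝ) + |x₁| ≤ 3 + |x| := by linarith
    rw [Real.norm_eq_abs]
    exact (hΦd x).trans (aux_mono hc0 (by positivity) h3)
  have := hconv.norm_image_sub_le_of_norm_deriv_le (f := fun x' => Φ x' v)
    (fun x _ => hdiff x) hbound hx₂ hx₁
  rw [Real.norm_eq_abs, Real.norm_eq_abs] at this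
  exact this

/-- Per-term difference majorant (for `2^j|u₁-u₂| ≤ 1`). -/
lemma aux_term_maj_diff {αr M δ C C' c : ℝ} {ε : ℕ → ℤ → ℝ} {Φ : ℝ → ℝ → ℝ} {v : ℝ}
    (hα0 : 0 < αr) (hα₂ : αr < 2) (hM : 0 < M) (hδ0 : 0 < δ) (hδ1 : δ < 1)
    (hC : 0 ≤ C) (hC' : 0 ≤ C') (hc0 : 0 ≤ c)
    (hpoly : ∀ (j : ℕ) (k : ℤ), |ε j k| ≤ C * (3 + (j:ℝ)) ^ δ * (3 + |(k:ℝ)|) ^ δ)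
    (hsharp : ∀ (j : ℕ) (k : ℤ), |(k:ℝ)| * 2 ^ (-(j:ℝ)) ≤ 2 * (M+1) →
      |ε j k| ≤ C' * 2 ^ ((j:ℝ)/αr))
    (hdiff : ∀ x : ℝ, DifferentiableAt ℝ (fun x' => Φ x' v) x)
    (hΦd : ∀ x : ℝ, |deriv (fun x' => Φ x' v) x| ≤ c / (3 + |x|) ^ 2)
    {u₁ u₂ : ℝ} (hu₁ : |u₁| ≤ M) (hu₂ : |u₂| ≤ M) (j : ℕ) (k : ℤ)
    (hsmall : 2 ^ ((j:ℝ)) * |u₁ - u₂| ≤ 1) :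
    |ε j k| * |Φ (2 ^ ((j:ℝ)) * u₁ - (k:ℝ)) v - Φ (2 ^ ((j:ℝ)) * u₂ - (k:ℝ)) v| ≤
      2 ^ ((j:ℝ)) * |u₁ - u₂| * (2 ^ ((j:ℝ)/αr) *
        (C' * c * (1 / ((2:ℝ) + |2 ^ ((j:ℝ)) * u₁ - (k:ℝ)|) ^ 2)
          + 0 * (1 / ((2:ℝ) + |(0:ℝ) - (k:ℝ)|) ^ 2)
          + 12 * c * C * (1 / ((3:ℝ) + |(k:ℝ)|) ^ (2 - δ)))) := by
  have hk3 : (0:ℝ) < 3 + |(k:ℝ)| := by positivity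
  have hPj : (0:ℝ) < 2 ^ ((j:ℝ)) := Real.rpow_pos_of_pos two_pos _
  have hPa : (0:ℝ) < 2 ^ ((j:ℝ)/αr) := Real.rpow_pos_of_pos two_pos _
  set x₁ := 2 ^ ((j:ℝ)) * u₁ - (k:ℝ) with hx₁def
  set x₂ := 2 ^ ((j:ℝ)) * u₂ - (k:ℝ) with hx₂def
  have hx12 : x₁ - x₂ = 2 ^ ((j:ℝ)) * (u₁ - u₂) := by rw [hx₁def, hx₂def]; ring
  have habs : |x₁ - x₂| = 2 ^ ((j:ℝ)) * |u₁ - u₂| := by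
    rw [hx12, abs_mul, abs_of_pos hPj]
  have hmvt := aux_mvt hc0 hdiff hΦd (x₁ := x₁) (x₂ := x₂) (by rw [habs]; exact hsmall)
  rw [habs] at hmvt
  have key : |ε j k| * (c / ((2:ℝ) + |x₁|) ^ 2) ≤
      2 ^ ((j:ℝ)/αr) * (C' * c * (1 / ((2:ℝ) + |x₁|) ^ 2)
        + 12 * c * C * (1 / ((3:ℝ) + |(k:ℝ)|) ^ (2 - δ))) := by
    by_cases hk : |(k:ℝ)| * 2 ^ (-(j:ℝ)) ≤ 2 * (M+1)
    · have hε := hsharp j k hk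
      have h1 : |ε j k| * (c / ((2:ℝ) + |x₁|) ^ 2) ≤
          (C' * 2 ^ ((j:ℝ)/αr)) * (c / ((2:ℝ) + |x₁|) ^ 2) := by
        apply mul_le_mul_of_nonneg_right hε (by positivity)
      have h2 : (0:ℝ) ≤ 2 ^ ((j:ℝ)/αr) * (12 * c * C * (1 / ((3:ℝ) + |(k:ℝ)|) ^ (2 - δ))) := by
        positivity
      calc |ε j k| * (c / ((2:ℝ) + |x₁|) ^ 2)
          ≤ (C' * 2 ^ ((j:ℝ)/αr)) * (c / ((2:ℝ) + |x₁|) ^ 2) := h1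
        _ = 2 ^ ((j:ℝ)/αr) * (C' * c * (1 / ((2:ℝ) + |x₁|) ^ 2)) := by ring
        _ ≤ _ := by nlinarith
    · have hε := aux_eps_noncone hα0 hα₂ hC hδ0 hδ1 hpoly j k
      have hgeo := aux_geom_cone hM hu₁ j k hk
      have hb1 : c / ((2:ℝ) + |x₁|) ^ 2 ≤ c / (((3:ℝ) + |(k:ℝ)|) / 2) ^ 2 := by
        apply div_le_div_of_nonneg_left hc0 (by positivity)
        apply pow_le_pow_left₀ (by positivity) hgeo
      have hb1' : c / (((3:ℝ) + |(k:ℝ)|) / 2) ^ 2 = 4 * c * (1 / ((3:ℝ) + |(k:ℝ)|) ^ 2) := by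
        field_simp; ring
      calc |ε j k| * (c / ((2:ℝ) + |x₁|) ^ 2)
          ≤ (3 * C * 2 ^ ((j:ℝ)/αr) * (3 + |(k:ℝ)|) ^ δ) * (4 * c * (1 / ((3:ℝ) + |(k:ℝ)|) ^ 2)) := by
            apply mul_le_mul hε (by rw [← hb1']; exact hb1) (by positivity)
            positivity
        _ = 2 ^ ((j:ℝ)/αr) * (12 * c * C * ((3 + |(k:ℝ)|) ^ δ * (1 / ((3:ℝ) + |(k:ℝ)|) ^ 2))) := by
            ring
        _ = 2 ^ ((j:ℝ)/αr) * (12 * c * C * (1 / ((3:ℝ) + |(k:ℝ)|) ^ (2 - δ))) := by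
            rw [aux_delta_combine hk3]
        _ ≤ _ := by
            have : (0:ℝ) ≤ 2 ^ ((j:ℝ)/αr) * (C' * c * (1 / ((2:ℝ) + |x₁|) ^ 2)) := by positivity
            nlinarith
  calc |ε j k| * |Φ x₁ v - Φ x₂ v|
      ≤ |ε j k| * (c / ((2:ℝ) + |x₁|) ^ 2 * (2 ^ ((j:ℝ)) * |u₁ - u₂|)) :=
        mul_le_mul_of_nonneg_left hmvt (abs_nonneg _)
    _ = (2 ^ ((j:ℝ)) * |u₁ - u₂|) * (|ε j k| * (c / ((2:ℝ) + |x₁|) ^ 2)) := by ring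
    _ ≤ (2 ^ ((j:ℝ)) * |u₁ - u₂|) * (2 ^ ((j:ℝ)/αr) * (C' * c * (1 / ((2:ℝ) + |x₁|) ^ 2)
        + 12 * c * C * (1 / ((3:ℝ) + |(k:ℝ)|) ^ (2 - δ)))) := by
        apply mul_le_mul_of_nonneg_left key (by positivity)
    _ = _ := by ring



lemma aux_T_summable {δ : ℝ} (hδ1 : δ < 1) :
    Summable (fun k : ℤ => 1 / ((3:ℝ) + |(k:ℝ)|) ^ (2 - δ)) :=
  aux_summable_int_rpow (by linarith) (by norm_num)

/-- Sum over `k` of the majorant shape. -/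
lemma aux_sum_k_core {δ : ℝ} (hδ1 : δ < 1) (A₁ A₂ B y₁ y₂ : ℝ)
    (hA₁ : 0 ≤ A₁) (hA₂ : 0 ≤ A₂) (hB : 0 ≤ B) :
    Summable (fun k : ℤ => A₁ * (1 / ((2:ℝ) + |y₁ - (k:ℝ)|) ^ 2)
      + A₂ * (1 / ((2:ℝ) + |y₂ - (k:ℝ)|) ^ 2)
      + B * (1 / ((3:ℝ) + |(k:ℝ)|) ^ (2 - δ))) ∧
    ∑' k : ℤ, (A₁ * (1 / ((2:ℝ) + |y₁ - (k:ℝ)|) ^ 2)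
      + A₂ * (1 / ((2:ℝ) + |y₂ - (k:ℝ)|) ^ 2)
      + B * (1 / ((3:ℝ) + |(k:ℝ)|) ^ (2 - δ)))
      ≤ (A₁ + A₂) * (∑' m : ℤ, 1 / ((1:ℝ) + |(m:ℝ)|) ^ 2)
        + B * (∑' k : ℤ, 1 / ((3:ℝ) + |(k:ℝ)|) ^ (2 - δ)) := by
  have s₁ := (aux_shift_summable y₁).mul_left A₁
  have s₂ := (aux_shift_summable y₂).mul_left A₂
  have s₃ := (aux_T_summable hδ1).mul_left B
  refine ⟨(s₁.add s₂).add s₃, ?_⟩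
  rw [Summable.tsum_add (s₁.add s₂) s₃, Summable.tsum_add s₁ s₂, tsum_mul_left, tsum_mul_left, tsum_mul_left]
  have t₁ : A₁ * ∑' k : ℤ, 1 / ((2:ℝ) + |y₁ - (k:ℝ)|) ^ 2
      ≤ A₁ * ∑' m : ℤ, 1 / ((1:ℝ) + |(m:ℝ)|) ^ 2 :=
    mul_le_mul_of_nonneg_left (aux_shift_tsum_le y₁) hA₁
  have t₂ : A₂ * ∑' k : ℤ, 1 / ((2:ℝ) + |y₂ - (k:ℝ)|) ^ 2
      ≤ A₂ * ∑' m : ℤ, 1 / ((1:ℝ) + |(m:ℝ)|) ^ 2 :=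
    mul_le_mul_of_nonneg_left (aux_shift_tsum_le y₂) hA₂
  linarith

lemma aux_two_rpow_neg_lt_one {γ : ℝ} (hγ : 0 < γ) : (2:ℝ) ^ (-γ) < 1 :=
  Real.rpow_lt_one_of_one_lt_of_neg one_lt_two (by linarith)

lemma aux_geom_j {γ : ℝ} (hγ : 0 < γ) :
    Summable (fun j : ℕ => (2:ℝ) ^ (-(j:ℝ) * γ)) ∧
      ∑' j : ℕ, (2:ℝ) ^ (-(j:ℝ) * γ) ≤ (1 - (2:ℝ) ^ (-γ))⁻¹ := by
  have h0 : (0:ℝ) ≤ (2:ℝ) ^ (-γ) := (Real.rpow_pos_of_pos two_pos _).le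
  have h1 : (2:ℝ) ^ (-γ) < 1 := aux_two_rpow_neg_lt_one hγ
  have he : ∀ j : ℕ, (2:ℝ) ^ (-(j:ℝ) * γ) = ((2:ℝ) ^ (-γ)) ^ j := by
    intro j; rw [aux_rpow_pow]; congr 1; ring
  constructor
  · exact (summable_geometric_of_lt_one h0 h1).congr (fun j => (he j).symm)
  · exact le_of_eq ((tsum_congr he).trans (tsum_geometric_of_lt_one h0 h1))



/-- Main dyadic summation lemma. -/
lemma aux_holder_sum {γ γ₀ γ₁ D₁ D₂ h : ℝ} {g : ℕ → ℝ}
    (hγ0 : 0 < γ) (hγ1 : γ < 1) (hh : 0 < h)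
    (hD₁ : 0 ≤ D₁) (hD₂ : 0 ≤ D₂)
    (hgpos : ∀ j, 0 ≤ g j)
    (hbound1 : ∀ j : ℕ, g j ≤ 2 * D₁ * 2 ^ (-(j:ℝ) * γ))
    (hbound2 : ∀ j : ℕ, 2 ^ ((j:ℝ)) * h ≤ 1 → g j ≤ D₂ * h * 2 ^ ((j:ℝ) * (1 - γ)))
    (hγγ₀ : γ₀ ≤ γ) (hγ₀0 : 0 < γ₀) (hγγ₁ : γ ≤ γ₁) (hγ₁1 : γ₁ < 1) :
    Summable g ∧ ∑' j, g j ≤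
      (2 * D₂ / ((2:ℝ) ^ (1 - γ₁) - 1) + 2 * D₁ / (1 - (2:ℝ) ^ (-γ₀))) * h ^ γ := by
  have hgeo := aux_geom_j hγ0
  have hgs : Summable g :=
    Summable.of_nonneg_of_le hgpos hbound1 (hgeo.1.mul_left (2 * D₁))
  refine ⟨hgs, ?_⟩
  have e₀pos : (0:ℝ) < 1 - (2:ℝ) ^ (-γ₀) := by
    have := aux_two_rpow_neg_lt_one hγ₀0; linarith
  have e₁pos : (0:ℝ) < (2:ℝ) ^ (1 - γ₁) - 1 := by
    have h1 : (2:ℝ) ^ (0:ℝ) < (2:ℝ) ^ (1 - γ₁) :=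
      Real.rpow_lt_rpow_of_exponent_lt one_lt_two (by linarith)
    rw [Real.rpow_zero] at h1; linarith
  have hX : (0:ℝ) ≤ 2 * D₂ / ((2:ℝ) ^ (1 - γ₁) - 1) := by positivity
  have hY : (0:ℝ) ≤ 2 * D₁ / (1 - (2:ℝ) ^ (-γ₀)) := by positivity
  have hγmono : (2:ℝ) ^ (-γ) ≤ (2:ℝ) ^ (-γ₀) :=
    Real.rpow_le_rpow_of_exponent_le one_le_two (by linarith)
  have heγpos : (0:ℝ) < 1 - (2:ℝ) ^ (-γ) := by
    have := aux_two_rpow_neg_lt_one hγ0; linarith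
  have hinv : (1 - (2:ℝ) ^ (-γ))⁻¹ ≤ (1 - (2:ℝ) ^ (-γ₀))⁻¹ := by
    apply inv_anti₀ e₀pos; linarith
  have hhγpos : (0:ℝ) < h ^ γ := Real.rpow_pos_of_pos hh _
  rcases le_or_gt 1 h with hge | hlt
  · -- h ≥ 1
    have h1γ : (1:ℝ) ≤ h ^ γ := by
      have := Real.rpow_le_rpow zero_le_one hge hγ0.le
      rwa [Real.one_rpow] at this
    have hsum1 : ∑' j, g j ≤ 2 * D₁ * (1 - (2:ℝ) ^ (-γ))⁻¹ := by
      calc ∑' j, g j ≤ ∑' j : ℕ, 2 * D₁ * 2 ^ (-(j:ℝ) * γ) :=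
            Summable.tsum_le_tsum hbound1 hgs (hgeo.1.mul_left (2 * D₁))
        _ = 2 * D₁ * ∑' j : ℕ, (2:ℝ) ^ (-(j:ℝ) * γ) := tsum_mul_left
        _ ≤ 2 * D₁ * (1 - (2:ℝ) ^ (-γ))⁻¹ :=
            mul_le_mul_of_nonneg_left hgeo.2 (by linarith)
    have h2 : 2 * D₁ * (1 - (2:ℝ) ^ (-γ))⁻¹ ≤ 2 * D₁ / (1 - (2:ℝ) ^ (-γ₀)) := by
      rw [div_eq_mul_inv]
      exact mul_le_mul_of_nonneg_left hinv (by linarith)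
    nlinarith
  · -- h < 1 : dyadic splitting
    obtain ⟨n₀, hn₀⟩ := exists_pow_lt_of_lt_one hh (by norm_num : (2:ℝ)⁻¹ < 1)
    have Hex : ∃ n : ℕ, ((2:ℝ)⁻¹) ^ n < h := ⟨n₀, hn₀⟩
    set J := Nat.find Hex with hJdef
    have hJspec : ((2:ℝ)⁻¹) ^ J < h := Nat.find_spec Hex
    have hJne : J ≠ 0 := by
      intro h0
      rw [h0, pow_zero] at hJspec; linarith
    have hJ1 : h ≤ ((2:ℝ)⁻¹) ^ (J - 1) := by
      by_contra hcon
      push_neg at hcon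
      exact Nat.find_min Hex (Nat.pred_lt hJne) hcon
    have hPJ : (0:ℝ) < ((2:ℝ)⁻¹) ^ J := by positivity
    have hJ2 : h ≤ 2 * ((2:ℝ)⁻¹) ^ J := by
      have hstep : ((2:ℝ)⁻¹) ^ (J - 1) * (2:ℝ)⁻¹ = ((2:ℝ)⁻¹) ^ J := by
        conv_rhs => rw [show J = (J-1)+1 from (Nat.succ_pred_eq_of_ne_zero hJne).symm]
        rw [pow_succ]
      nlinarith
    have hbridge : ((2:ℝ)⁻¹) ^ J = (2:ℝ) ^ (-(J:ℝ)) := by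
      have h21 : ((2:ℝ)⁻¹) = (2:ℝ) ^ (-1:ℝ) := by rw [Real.rpow_neg_one]
      rw [h21, aux_rpow_pow]
      norm_num
    have hsplit := (Summable.sum_add_tsum_nat_add J hgs).symm
    -- tail estimate
    have htail_sum : Summable (fun i : ℕ => 2 * D₁ * 2 ^ (-(J:ℝ) * γ) * 2 ^ (-(i:ℝ) * γ)) :=
      hgeo.1.mul_left _
    have htail_pt : ∀ i : ℕ, g (i + J) ≤ 2 * D₁ * 2 ^ (-(J:ℝ) * γ) * 2 ^ (-(i:ℝ) * γ) := by
      intro i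
      have hb := hbound1 (i + J)
      have he : (2:ℝ) ^ (-((i + J : ℕ):ℝ) * γ) = 2 ^ (-(J:ℝ) * γ) * 2 ^ (-(i:ℝ) * γ) := by
        rw [← Real.rpow_add two_pos]
        congr 1
        push_cast
        ring
      rw [he] at hb
      linarith
    have htails : Summable (fun i : ℕ => g (i + J)) :=
      Summable.of_nonneg_of_le (fun i => hgpos _) htail_pt htail_sum
    have hJγh : (2:ℝ) ^ (-(J:ℝ) * γ) ≤ h ^ γ := by
      have h1 : (2:ℝ) ^ (-(J:ℝ) * γ) = ((2:ℝ) ^ (-(J:ℝ))) ^ γ := by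
        rw [← Real.rpow_mul (by norm_num : (0:ℝ) ≤ 2)]
      rw [h1, ← hbridge]
      exact Real.rpow_le_rpow hPJ.le hJspec.le hγ0.le
    have htail' : ∑' i : ℕ, g (i + J) ≤ 2 * D₁ / (1 - (2:ℝ) ^ (-γ₀)) * h ^ γ := by
      have htail : ∑' i : ℕ, g (i + J) ≤ 2 * D₁ * 2 ^ (-(J:ℝ) * γ) * (1 - (2:ℝ) ^ (-γ))⁻¹ := by
        calc ∑' i : ℕ, g (i + J) ≤ ∑' i : ℕ, 2 * D₁ * 2 ^ (-(J:ℝ) * γ) * 2 ^ (-(i:ℝ) * γ) :=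
              Summable.tsum_le_tsum htail_pt htails htail_sum
          _ = 2 * D₁ * 2 ^ (-(J:ℝ) * γ) * ∑' i : ℕ, (2:ℝ) ^ (-(i:ℝ) * γ) := tsum_mul_left
          _ ≤ _ := mul_le_mul_of_nonneg_left hgeo.2 (by positivity)
      have step : 2 * D₁ * 2 ^ (-(J:ℝ) * γ) * (1 - (2:ℝ) ^ (-γ))⁻¹ ≤
          2 * D₁ * h ^ γ * (1 - (2:ℝ) ^ (-γ₀))⁻¹ := by
        apply mul_le_mul
        · exact mul_le_mul_of_nonneg_left hJγh (by linarith)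
        · exact hinv
        · positivity
        · positivity
      calc ∑' i : ℕ, g (i + J) ≤ 2 * D₁ * 2 ^ (-(J:ℝ) * γ) * (1 - (2:ℝ) ^ (-γ))⁻¹ := htail
        _ ≤ 2 * D₁ * h ^ γ * (1 - (2:ℝ) ^ (-γ₀))⁻¹ := step
        _ = 2 * D₁ / (1 - (2:ℝ) ^ (-γ₀)) * h ^ γ := by rw [div_eq_mul_inv]; ring
    -- head estimate
    set q : ℝ := (2:ℝ) ^ (1 - γ) with hqdef
    have hq1 : (1:ℝ) < q := by
      rw [hqdef]
      have h1 : (2:ℝ) ^ (0:ℝ) < (2:ℝ) ^ (1 - γ) :=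
        Real.rpow_lt_rpow_of_exponent_lt one_lt_two (by linarith)
      rwa [Real.rpow_zero] at h1
    have hhead_pt : ∀ j ∈ Finset.range J, g j ≤ D₂ * h * q ^ j := by
      intro j hj
      rw [Finset.mem_range] at hj
      have hjJ : j ≤ J - 1 := Nat.le_pred_of_lt hj
      have hsmall : 2 ^ ((j:ℝ)) * h ≤ 1 := by
        have h1 : (2:ℝ) ^ ((j:ℝ)) = ((2:ℝ)) ^ j := Real.rpow_natCast 2 j
        have h2 : ((2:ℝ)) ^ j ≤ ((2:ℝ)) ^ (J - 1) := pow_le_pow_right₀ one_le_two hjJ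
        have h3 : h ≤ (((2:ℝ)) ^ (J-1))⁻¹ := by rw [← inv_pow]; exact hJ1
        have h4 : (0:ℝ) < ((2:ℝ)) ^ (J-1) := by positivity
        calc 2 ^ ((j:ℝ)) * h ≤ ((2:ℝ)) ^ (J-1) * (((2:ℝ)) ^ (J-1))⁻¹ := by
              rw [h1]
              apply mul_le_mul h2 h3 hh.le (by positivity)
          _ = 1 := mul_inv_cancel₀ (ne_of_gt h4)
      have hb := hbound2 j hsmall
      have he : (2:ℝ) ^ ((j:ℝ) * (1 - γ)) = q ^ j := by rw [hqdef, aux_rpow_pow]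
      rw [he] at hb
      exact hb
    have hhead : ∑ j ∈ Finset.range J, g j ≤ D₂ * h * ((q ^ J - 1) / (q - 1)) := by
      calc ∑ j ∈ Finset.range J, g j ≤ ∑ j ∈ Finset.range J, D₂ * h * q ^ j :=
            Finset.sum_le_sum hhead_pt
        _ = D₂ * h * ∑ j ∈ Finset.range J, q ^ j := by rw [Finset.mul_sum]
        _ = D₂ * h * ((q ^ J - 1) / (q - 1)) := by rw [geom_sum_eq (ne_of_gt hq1)]
    have hb0 : (0:ℝ) < h ^ (1 - γ) := Real.rpow_pos_of_pos hh _
    have hqJ : q ^ J ≤ 2 / h ^ (1 - γ) := by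
      have h2J : ((2:ℝ)) ^ J ≤ 2 / h := by
        have h3 : ((2:ℝ)) ^ J = (((2:ℝ)⁻¹) ^ J)⁻¹ := by rw [inv_pow, inv_inv]
        rw [h3, le_div_iff₀ hh]
        calc (((2:ℝ)⁻¹) ^ J)⁻¹ * h ≤ (((2:ℝ)⁻¹) ^ J)⁻¹ * (2 * ((2:ℝ)⁻¹) ^ J) :=
              mul_le_mul_of_nonneg_left hJ2 (by positivity)
          _ = 2 := by field_simp
      have h1 : q ^ J = ((2:ℝ) ^ J) ^ (1 - γ) := by
        rw [hqdef, aux_rpow_pow, ← Real.rpow_natCast ((2:ℝ)) J,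
          ← Real.rpow_mul (by norm_num : (0:ℝ) ≤ 2)]
      have h4 : ((2:ℝ) ^ J) ^ (1 - γ) ≤ ((2:ℝ) / h) ^ (1 - γ) :=
        Real.rpow_le_rpow (by positivity) h2J (by linarith)
      have h5 : ((2:ℝ) / h) ^ (1 - γ) = (2:ℝ) ^ (1 - γ) / h ^ (1 - γ) :=
        Real.div_rpow (by norm_num) hh.le _
      have h6 : (2:ℝ) ^ (1 - γ) ≤ 2 := by
        have := Real.rpow_le_rpow_of_exponent_le one_le_two (by linarith : 1 - γ ≤ 1)
        rwa [Real.rpow_one] at this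
      rw [h1]
      rw [h5] at h4
      calc ((2:ℝ) ^ J) ^ (1 - γ) ≤ (2:ℝ) ^ (1 - γ) / h ^ (1 - γ) := h4
        _ ≤ 2 / h ^ (1 - γ) := by gcongr
    have hE : (2:ℝ) ^ (1 - γ₁) - 1 ≤ q - 1 := by
      have := Real.rpow_le_rpow_of_exponent_le one_le_two (by linarith : 1 - γ₁ ≤ 1 - γ)
      rw [hqdef]; linarith
    have hdiv : h / h ^ (1 - γ) = h ^ γ := by
      rw [div_eq_iff (ne_of_gt hb0)]
      rw [← Real.rpow_add hh]
      norm_num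
    have hhead' : ∑ j ∈ Finset.range J, g j ≤ 2 * D₂ / ((2:ℝ) ^ (1 - γ₁) - 1) * h ^ γ := by
      calc ∑ j ∈ Finset.range J, g j ≤ D₂ * h * ((q ^ J - 1) / (q - 1)) := hhead
        _ ≤ D₂ * h * ((2 / h ^ (1 - γ)) / ((2:ℝ) ^ (1 - γ₁) - 1)) := by
            apply mul_le_mul_of_nonneg_left _ (by positivity)
            apply div_le_div₀ (by positivity) (by linarith) e₁pos hE
        _ = (2 * D₂ / ((2:ℝ) ^ (1 - γ₁) - 1)) * (h / h ^ (1 - γ)) := by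
            field_simp
        _ = 2 * D₂ / ((2:ℝ) ^ (1 - γ₁) - 1) * h ^ γ := by rw [hdiv]
    rw [hsplit]
    linarith [add_le_add hhead' htail']

/-- Assembly: bound the difference of two double sums by the iterated sum of abs differences. -/
lemma aux_assemble {F₁ F₂ : ℕ × ℤ → ℝ} {B : ℝ}
    (hA₁ : Summable fun p => |F₁ p|) (hA₂ : Summable fun p => |F₂ p|)
    (hdrow : ∀ j : ℕ, Summable fun k : ℤ => |F₁ (j, k) - F₂ (j, k)|)
    (hB : ∑' j : ℕ, ∑' k : ℤ, |F₁ (j, k) - F₂ (j, k)| ≤ B) :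
    |(∑' p, F₁ p) - ∑' p, F₂ p| ≤ B := by
  have hF₁ : Summable F₁ := hA₁.of_abs
  have hF₂ : Summable F₂ := hA₂.of_abs
  have hdabs : Summable (fun p => |F₁ p - F₂ p|) :=
    Summable.of_nonneg_of_le (fun p => abs_nonneg _) (fun p => abs_sub _ _) (hA₁.add hA₂)
  rw [← Summable.tsum_sub hF₁ hF₂]
  calc |∑' p, (F₁ p - F₂ p)| ≤ ∑' p, |F₁ p - F₂ p| := by
        rw [← Real.norm_eq_abs]
        refine le_trans (norm_tsum_le_tsum_norm ?_) (le_of_eq ?_)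
        · simpa only [Real.norm_eq_abs] using hdabs
        · simp only [Real.norm_eq_abs]
    _ = ∑' j : ℕ, ∑' k : ℤ, |F₁ (j, k) - F₂ (j, k)| := Summable.tsum_prod' hdabs hdrow
    _ ≤ B := hB


end HighFreqAux

/-- The high-frequency part of the wavelet series:
`Ẍ(u,v) = Σ_{j ≥ 0} Σ_{k ∈ ℤ} 2^{-jv} ε_{j,k} (Φ(2^j u - k, v) - Φ(-k, v))`. -/
noncomputable def highFreqPart (ε : ℕ → ℤ → ℝ) (Φ : ℝ → ℝ → ℝ) (u v : ℝ) : ℝ :=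
  ∑' p : ℕ × ℤ,
    2 ^ (-(p.1 : ℝ) * v) * ε p.1 p.2 *
      (Φ (2 ^ ((p.1 : ℝ)) * u - (p.2 : ℝ)) v - Φ (-(p.2 : ℝ)) v)

/-- Deterministic form of the key Proposition on the high-frequency part `Ẍ`: under the
polynomial coefficient bound, the sharpened bound `|ε_{j,k}| ≤ C' 2^{j/α}` on the cone
`|k| 2^{-j} ≤ 2(M+1)`, and the localization of `Φ` and `∂ₓΦ`, the series converges
absolutely and `|Ẍ(u₁,v) - Ẍ(u₂,v)| ≤ C₆ |u₁ - u₂|^{v - 1/α}` uniformly on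
`[-M,M]² × [a,b]`, without any logarithmic factor. -/
theorem highFreqPart_holder_estimate
    (α M η a b : ℝ) (hα₁ : 1 < α) (hα₂ : α < 2) (hM : 0 < M)
    (hη : 0 < η) (hη' : η < min 1 (a - 1 / α))
    (ha : 1 / α < a) (hab : a < b) (hb : b < 1)
    (ε : ℕ → ℤ → ℝ) (C C' : ℝ) (hC : 0 ≤ C) (hC' : 0 ≤ C')
    (hpoly : ∀ (j : ℕ) (k : ℤ),
      |ε j k| ≤ C * (3 + (j : ℝ)) ^ (1 / α + η) * (3 + |(k : ℝ)|) ^ (1 / α + η))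
    (hsharp : ∀ (j : ℕ) (k : ℤ), |(k : ℝ)| * 2 ^ (-(j : ℝ)) ≤ 2 * (M + 1) →
      |ε j k| ≤ C' * 2 ^ ((j : ℝ) / α))
    (Φ : ℝ → ℝ → ℝ)
    (hdiff : ∀ v ∈ Icc a b, ∀ x : ℝ, DifferentiableAt ℝ (fun x' => Φ x' v) x)
    (hloc : ∃ c : ℝ, ∀ x : ℝ, ∀ v ∈ Icc a b,
      (3 + |x|) ^ 2 * (|Φ x v| + |deriv (fun x' => Φ x' v) x|) ≤ c) :
    (∀ u ∈ Icc (-M) M, ∀ v ∈ Icc a b,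
      Summable (fun p : ℕ × ℤ =>
        |2 ^ (-(p.1 : ℝ) * v) * ε p.1 p.2 *
          (Φ (2 ^ ((p.1 : ℝ)) * u - (p.2 : ℝ)) v - Φ (-(p.2 : ℝ)) v)|)) ∧
    ∃ C₆ : ℝ, 0 ≤ C₆ ∧ ∀ u₁ ∈ Icc (-M) M, ∀ u₂ ∈ Icc (-M) M, ∀ v ∈ Icc a b,
      |highFreqPart ε Φ u₁ v - highFreqPart ε Φ u₂ v| ≤
        C₆ * |u₁ - u₂| ^ (v - 1 / α) := by
  obtain ⟨c₀, hc⟩ := hloc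
  have hα0 : (0:ℝ) < α := by linarith
  have hia : (0:ℝ) < 1/α := by positivity
  have hηa : η < a - 1/α := lt_of_lt_of_le hη' (min_le_right _ _)
  have hab1 : a < 1 := lt_trans hab hb
  have hδa : 1/α + η < a := by linarith
  have hδ1 : 1/α + η < 1 := by linarith
  have hδ0 : (0:ℝ) < 1/α + η := by linarith
  have hc0 : (0:ℝ) ≤ c₀ := le_trans (by positivity) (hc 0 a ⟨le_refl a, hab.le⟩)
  have hΦb : ∀ v ∈ Icc a b, ∀ x : ℝ, |Φ x v| ≤ c₀ / (3 + |x|) ^ 2 := by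
    intro v hv x
    have h1 := hc x v hv
    have h2 : (0:ℝ) < (3 + |x|) ^ 2 := by positivity
    rw [le_div_iff₀ h2]
    nlinarith [mul_nonneg h2.le (abs_nonneg (deriv (fun x' => Φ x' v) x))]
  have hΦd : ∀ v ∈ Icc a b, ∀ x : ℝ, |deriv (fun x' => Φ x' v) x| ≤ c₀ / (3 + |x|) ^ 2 := by
    intro v hv x
    have h1 := hc x v hv
    have h2 : (0:ℝ) < (3 + |x|) ^ 2 := by positivity
    rw [le_div_iff₀ h2]
    nlinarith [mul_nonneg h2.le (abs_nonneg (Φ x v))]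
  have hγv : ∀ v ∈ Icc a b, 0 < v - 1/α ∧ v - 1/α < 1 := by
    intro v hv
    exact ⟨by linarith [hv.1], by linarith [hv.2]⟩
  -- key row bound, plain
  have key₁ : ∃ D₁ : ℝ, 0 ≤ D₁ ∧ ∀ v ∈ Icc a b, ∀ u : ℝ, |u| ≤ M → ∀ j : ℕ,
      Summable (fun k : ℤ => |2 ^ (-(j:ℝ) * v) * ε j k *
        (Φ (2 ^ ((j:ℝ)) * u - (k:ℝ)) v - Φ (-(k:ℝ)) v)|) ∧
      ∑' k : ℤ, |2 ^ (-(j:ℝ) * v) * ε j k *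
        (Φ (2 ^ ((j:ℝ)) * u - (k:ℝ)) v - Φ (-(k:ℝ)) v)|
        ≤ D₁ * 2 ^ (-(j:ℝ) * (v - 1/α)) := by
    refine ⟨((C' * c₀ + C' * c₀) * (∑' m : ℤ, 1 / ((1:ℝ) + |(m:ℝ)|) ^ 2)
      + 15 * c₀ * C * (∑' k : ℤ, 1 / ((3:ℝ) + |(k:ℝ)|) ^ (2 - (1/α + η)))), ?_, ?_⟩
    · have hS0 : (0:ℝ) ≤ ∑' m : ℤ, 1 / ((1:ℝ) + |(m:ℝ)|) ^ 2 :=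
        tsum_nonneg fun m => by positivity
      have hT0 : (0:ℝ) ≤ ∑' k : ℤ, 1 / ((3:ℝ) + |(k:ℝ)|) ^ (2 - (1/α + η)) :=
        tsum_nonneg fun k => by positivity
      have h1 : (0:ℝ) ≤ C' * c₀ + C' * c₀ := by positivity
      have h2 : (0:ℝ) ≤ 15 * c₀ * C := by positivity
      exact add_nonneg (mul_nonneg h1 hS0) (mul_nonneg h2 hT0)
    · intro v hv u hu j
      obtain ⟨hcoresum, hcorele⟩ := aux_sum_k_core (δ := 1/α + η) hδ1 (C' * c₀) (C' * c₀)
        (15 * c₀ * C) (2 ^ ((j:ℝ)) * u) 0 (by positivity) (by positivity) (by positivity)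
      have hP : (0:ℝ) < 2 ^ (-(j:ℝ) * v) := Real.rpow_pos_of_pos two_pos _
      have hmaj := fun k : ℤ => aux_term_maj (αr := α) (M := M) (δ := 1/α + η)
        hα0 hα₂ hM hδ0 hδ1 hC hC' hc0 hpoly hsharp (hΦb v hv) hu j k
      have hpt : ∀ k : ℤ,
          |2 ^ (-(j:ℝ) * v) * ε j k * (Φ (2 ^ ((j:ℝ)) * u - (k:ℝ)) v - Φ (-(k:ℝ)) v)|
          ≤ (2 ^ (-(j:ℝ) * v) * 2 ^ ((j:ℝ)/α)) *
              (C' * c₀ * (1 / ((2:ℝ) + |2 ^ ((j:ℝ)) * u - (k:ℝ)|) ^ 2)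
                + C' * c₀ * (1 / ((2:ℝ) + |(0:ℝ) - (k:ℝ)|) ^ 2)
                + 15 * c₀ * C * (1 / ((3:ℝ) + |(k:ℝ)|) ^ (2 - (1/α + η)))) := by
        intro k
        rw [abs_mul, abs_mul, abs_of_pos hP]
        calc 2 ^ (-(j:ℝ) * v) * |ε j k| * |Φ (2 ^ ((j:ℝ)) * u - (k:ℝ)) v - Φ (-(k:ℝ)) v|
            ≤ 2 ^ (-(j:ℝ) * v) *
                (|ε j k| * (|Φ (2 ^ ((j:ℝ)) * u - (k:ℝ)) v| + |Φ (-(k:ℝ)) v|)) := by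
              rw [mul_assoc]
              exact mul_le_mul_of_nonneg_left
                (mul_le_mul_of_nonneg_left (abs_sub _ _) (abs_nonneg _)) hP.le
          _ ≤ 2 ^ (-(j:ℝ) * v) * (2 ^ ((j:ℝ)/α) *
                (C' * c₀ * (1 / ((2:ℝ) + |2 ^ ((j:ℝ)) * u - (k:ℝ)|) ^ 2)
                  + C' * c₀ * (1 / ((2:ℝ) + |(0:ℝ) - (k:ℝ)|) ^ 2)
                  + 15 * c₀ * C * (1 / ((3:ℝ) + |(k:ℝ)|) ^ (2 - (1/α + η))))) :=
              mul_le_mul_of_nonneg_left (hmaj k) hP.le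
          _ = _ := by ring
      have hmsum := hcoresum.mul_left (2 ^ (-(j:ℝ) * v) * 2 ^ ((j:ℝ)/α))
      have hrs : Summable (fun k : ℤ => |2 ^ (-(j:ℝ) * v) * ε j k *
          (Φ (2 ^ ((j:ℝ)) * u - (k:ℝ)) v - Φ (-(k:ℝ)) v)|) :=
        Summable.of_nonneg_of_le (fun k => abs_nonneg _) hpt hmsum
      refine ⟨hrs, ?_⟩
      have hee : (2:ℝ) ^ (-(j:ℝ) * v) * 2 ^ ((j:ℝ)/α) = 2 ^ (-(j:ℝ) * (v - 1/α)) := by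
        rw [← Real.rpow_add two_pos]
        congr 1
        ring
      calc ∑' k : ℤ, |2 ^ (-(j:ℝ) * v) * ε j k *
            (Φ (2 ^ ((j:ℝ)) * u - (k:ℝ)) v - Φ (-(k:ℝ)) v)|
          ≤ ∑' k : ℤ, (2 ^ (-(j:ℝ) * v) * 2 ^ ((j:ℝ)/α)) *
              (C' * c₀ * (1 / ((2:ℝ) + |2 ^ ((j:ℝ)) * u - (k:ℝ)|) ^ 2)
                + C' * c₀ * (1 / ((2:ℝ) + |(0:ℝ) - (k:ℝ)|) ^ 2)
                + 15 * c₀ * C * (1 / ((3:ℝ) + |(k:ℝ)|) ^ (2 - (1/α + η)))) :=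
            Summable.tsum_le_tsum hpt hrs hmsum
        _ = (2 ^ (-(j:ℝ) * v) * 2 ^ ((j:ℝ)/α)) * ∑' k : ℤ,
              (C' * c₀ * (1 / ((2:ℝ) + |2 ^ ((j:ℝ)) * u - (k:ℝ)|) ^ 2)
                + C' * c₀ * (1 / ((2:ℝ) + |(0:ℝ) - (k:ℝ)|) ^ 2)
                + 15 * c₀ * C * (1 / ((3:ℝ) + |(k:ℝ)|) ^ (2 - (1/α + η)))) := tsum_mul_left
        _ ≤ (2 ^ (-(j:ℝ) * v) * 2 ^ ((j:ℝ)/α)) *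
              ((C' * c₀ + C' * c₀) * (∑' m : ℤ, 1 / ((1:ℝ) + |(m:ℝ)|) ^ 2)
                + 15 * c₀ * C * (∑' k : ℤ, 1 / ((3:ℝ) + |(k:ℝ)|) ^ (2 - (1/α + η)))) :=
            mul_le_mul_of_nonneg_left hcorele (by positivity)
        _ = _ := by rw [hee]; ring
  -- key row bound for differences
  have key₂ : ∃ D₂ : ℝ, 0 ≤ D₂ ∧ ∀ v ∈ Icc a b, ∀ u₁ u₂ : ℝ, |u₁| ≤ M → |u₂| ≤ M → ∀ j : ℕ,
      2 ^ ((j:ℝ)) * |u₁ - u₂| ≤ 1 →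
      ∑' k : ℤ, |2 ^ (-(j:ℝ) * v) * ε j k * (Φ (2 ^ ((j:ℝ)) * u₁ - (k:ℝ)) v - Φ (-(k:ℝ)) v)
        - 2 ^ (-(j:ℝ) * v) * ε j k * (Φ (2 ^ ((j:ℝ)) * u₂ - (k:ℝ)) v - Φ (-(k:ℝ)) v)|
        ≤ D₂ * |u₁ - u₂| * 2 ^ ((j:ℝ) * (1 - (v - 1/α))) := by
    refine ⟨(C' * c₀ + 0) * (∑' m : ℤ, 1 / ((1:ℝ) + |(m:ℝ)|) ^ 2)
      + 12 * c₀ * C * (∑' k : ℤ, 1 / ((3:ℝ) + |(k:ℝ)|) ^ (2 - (1/α + η))), ?_, ?_⟩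
    · have hS0 : (0:ℝ) ≤ ∑' m : ℤ, 1 / ((1:ℝ) + |(m:ℝ)|) ^ 2 :=
        tsum_nonneg fun m => by positivity
      have hT0 : (0:ℝ) ≤ ∑' k : ℤ, 1 / ((3:ℝ) + |(k:ℝ)|) ^ (2 - (1/α + η)) :=
        tsum_nonneg fun k => by positivity
      have h1 : (0:ℝ) ≤ C' * c₀ + 0 := by positivity
      have h2 : (0:ℝ) ≤ 12 * c₀ * C := by positivity
      exact add_nonneg (mul_nonneg h1 hS0) (mul_nonneg h2 hT0)
    · intro v hv u₁ u₂ hu₁ hu₂ j hsmall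
      obtain ⟨hcoresum, hcorele⟩ := aux_sum_k_core (δ := 1/α + η) hδ1 (C' * c₀) 0
        (12 * c₀ * C) (2 ^ ((j:ℝ)) * u₁) 0 (by positivity) le_rfl (by positivity)
      have hP : (0:ℝ) < 2 ^ (-(j:ℝ) * v) := Real.rpow_pos_of_pos two_pos _
      have hmaj := fun k : ℤ => aux_term_maj_diff (αr := α) (M := M) (δ := 1/α + η)
        hα0 hα₂ hM hδ0 hδ1 hC hC' hc0 hpoly hsharp (hdiff v hv) (hΦd v hv) hu₁ hu₂ j k hsmall
      have hpt : ∀ k : ℤ,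
          |2 ^ (-(j:ℝ) * v) * ε j k * (Φ (2 ^ ((j:ℝ)) * u₁ - (k:ℝ)) v - Φ (-(k:ℝ)) v)
            - 2 ^ (-(j:ℝ) * v) * ε j k * (Φ (2 ^ ((j:ℝ)) * u₂ - (k:ℝ)) v - Φ (-(k:ℝ)) v)|
          ≤ (2 ^ (-(j:ℝ) * v) * (2 ^ ((j:ℝ)) * |u₁ - u₂| * 2 ^ ((j:ℝ)/α))) *
              (C' * c₀ * (1 / ((2:ℝ) + |2 ^ ((j:ℝ)) * u₁ - (k:ℝ)|) ^ 2)
                + 0 * (1 / ((2:ℝ) + |(0:ℝ) - (k:ℝ)|) ^ 2)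
                + 12 * c₀ * C * (1 / ((3:ℝ) + |(k:ℝ)|) ^ (2 - (1/α + η)))) := by
        intro k
        have heq : 2 ^ (-(j:ℝ) * v) * ε j k * (Φ (2 ^ ((j:ℝ)) * u₁ - (k:ℝ)) v - Φ (-(k:ℝ)) v)
            - 2 ^ (-(j:ℝ) * v) * ε j k * (Φ (2 ^ ((j:ℝ)) * u₂ - (k:ℝ)) v - Φ (-(k:ℝ)) v)
            = 2 ^ (-(j:ℝ) * v) * ε j k *
              (Φ (2 ^ ((j:ℝ)) * u₁ - (k:ℝ)) v - Φ (2 ^ ((j:ℝ)) * u₂ - (k:ℝ)) v) := by ring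
        rw [heq, abs_mul, abs_mul, abs_of_pos hP]
        calc 2 ^ (-(j:ℝ) * v) * |ε j k| *
              |Φ (2 ^ ((j:ℝ)) * u₁ - (k:ℝ)) v - Φ (2 ^ ((j:ℝ)) * u₂ - (k:ℝ)) v|
            = 2 ^ (-(j:ℝ) * v) * (|ε j k| *
              |Φ (2 ^ ((j:ℝ)) * u₁ - (k:ℝ)) v - Φ (2 ^ ((j:ℝ)) * u₂ - (k:ℝ)) v|) := by ring
          _ ≤ 2 ^ (-(j:ℝ) * v) * (2 ^ ((j:ℝ)) * |u₁ - u₂| * (2 ^ ((j:ℝ)/α) *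
                (C' * c₀ * (1 / ((2:ℝ) + |2 ^ ((j:ℝ)) * u₁ - (k:ℝ)|) ^ 2)
                  + 0 * (1 / ((2:ℝ) + |(0:ℝ) - (k:ℝ)|) ^ 2)
                  + 12 * c₀ * C * (1 / ((3:ℝ) + |(k:ℝ)|) ^ (2 - (1/α + η)))))) :=
              mul_le_mul_of_nonneg_left (hmaj k) hP.le
          _ = _ := by ring
      have hmsum := hcoresum.mul_left (2 ^ (-(j:ℝ) * v) * (2 ^ ((j:ℝ)) * |u₁ - u₂| * 2 ^ ((j:ℝ)/α)))
      have hrs : Summable (fun k : ℤ =>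
          |2 ^ (-(j:ℝ) * v) * ε j k * (Φ (2 ^ ((j:ℝ)) * u₁ - (k:ℝ)) v - Φ (-(k:ℝ)) v)
            - 2 ^ (-(j:ℝ) * v) * ε j k * (Φ (2 ^ ((j:ℝ)) * u₂ - (k:ℝ)) v - Φ (-(k:ℝ)) v)|) :=
        Summable.of_nonneg_of_le (fun k => abs_nonneg _) hpt hmsum
      have hee : (2:ℝ) ^ (-(j:ℝ) * v) * 2 ^ ((j:ℝ)) * 2 ^ ((j:ℝ)/α)
          = 2 ^ ((j:ℝ) * (1 - (v - 1/α))) := by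
        rw [← Real.rpow_add two_pos, ← Real.rpow_add two_pos]
        congr 1
        ring
      calc ∑' k : ℤ, |2 ^ (-(j:ℝ) * v) * ε j k *
            (Φ (2 ^ ((j:ℝ)) * u₁ - (k:ℝ)) v - Φ (-(k:ℝ)) v)
            - 2 ^ (-(j:ℝ) * v) * ε j k * (Φ (2 ^ ((j:ℝ)) * u₂ - (k:ℝ)) v - Φ (-(k:ℝ)) v)|
          ≤ ∑' k : ℤ, (2 ^ (-(j:ℝ) * v) * (2 ^ ((j:ℝ)) * |u₁ - u₂| * 2 ^ ((j:ℝ)/α))) *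
              (C' * c₀ * (1 / ((2:ℝ) + |2 ^ ((j:ℝ)) * u₁ - (k:ℝ)|) ^ 2)
                + 0 * (1 / ((2:ℝ) + |(0:ℝ) - (k:ℝ)|) ^ 2)
                + 12 * c₀ * C * (1 / ((3:ℝ) + |(k:ℝ)|) ^ (2 - (1/α + η)))) :=
            Summable.tsum_le_tsum hpt hrs hmsum
        _ = (2 ^ (-(j:ℝ) * v) * (2 ^ ((j:ℝ)) * |u₁ - u₂| * 2 ^ ((j:ℝ)/α))) * ∑' k : ℤ,
              (C' * c₀ * (1 / ((2:ℝ) + |2 ^ ((j:ℝ)) * u₁ - (k:ℝ)|) ^ 2)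
                + 0 * (1 / ((2:ℝ) + |(0:ℝ) - (k:ℝ)|) ^ 2)
                + 12 * c₀ * C * (1 / ((3:ℝ) + |(k:ℝ)|) ^ (2 - (1/α + η)))) := tsum_mul_left
        _ ≤ (2 ^ (-(j:ℝ) * v) * (2 ^ ((j:ℝ)) * |u₁ - u₂| * 2 ^ ((j:ℝ)/α))) *
              ((C' * c₀ + 0) * (∑' m : ℤ, 1 / ((1:ℝ) + |(m:ℝ)|) ^ 2)
                + 12 * c₀ * C * (∑' k : ℤ, 1 / ((3:ℝ) + |(k:ℝ)|) ^ (2 - (1/α + η)))) :=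
            mul_le_mul_of_nonneg_left hcorele (by positivity)
        _ = ((C' * c₀ + 0) * (∑' m : ℤ, 1 / ((1:ℝ) + |(m:ℝ)|) ^ 2)
              + 12 * c₀ * C * (∑' k : ℤ, 1 / ((3:ℝ) + |(k:ℝ)|) ^ (2 - (1/α + η))))
            * |u₁ - u₂| * (2 ^ (-(j:ℝ) * v) * 2 ^ ((j:ℝ)) * 2 ^ ((j:ℝ)/α)) := by ring
        _ = _ := by rw [hee]
  obtain ⟨D₁, hD₁0, key₁⟩ := key₁
  obtain ⟨D₂, hD₂0, key₂⟩ := key₂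
  have hsummAbs : ∀ v ∈ Icc a b, ∀ u : ℝ, |u| ≤ M →
      Summable (fun p : ℕ × ℤ => |2 ^ (-(p.1:ℝ) * v) * ε p.1 p.2 *
        (Φ (2 ^ ((p.1:ℝ)) * u - (p.2:ℝ)) v - Φ (-(p.2:ℝ)) v)|) := by
    intro v hv u hu
    obtain ⟨hγ0, hγ1⟩ := hγv v hv
    rw [summable_prod_of_nonneg (fun p => abs_nonneg _)]
    refine ⟨fun j => (key₁ v hv u hu j).1, ?_⟩
    exact Summable.of_nonneg_of_le (fun j => tsum_nonneg fun k => abs_nonneg _)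
      (fun j => (key₁ v hv u hu j).2) ((aux_geom_j hγ0).1.mul_left D₁)
  have e₀pos : (0:ℝ) < 1 - (2:ℝ) ^ (-(a - 1/α)) := by
    have := aux_two_rpow_neg_lt_one (show (0:ℝ) < a - 1/α by linarith)
    linarith
  have e₁pos : (0:ℝ) < (2:ℝ) ^ (1 - (b - 1/α)) - 1 := by
    have h1 : (2:ℝ) ^ (0:ℝ) < (2:ℝ) ^ (1 - (b - 1/α)) :=
      Real.rpow_lt_rpow_of_exponent_lt one_lt_two (by linarith)
    rw [Real.rpow_zero] at h1; linarith
  constructor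
  · intro u hu v hv
    exact hsummAbs v hv u (abs_le.mpr ⟨hu.1, hu.2⟩)
  · refine ⟨2 * D₂ / ((2:ℝ) ^ (1 - (b - 1/α)) - 1) + 2 * D₁ / (1 - (2:ℝ) ^ (-(a - 1/α))),
      ?_, ?_⟩
    · exact add_nonneg (div_nonneg (by linarith) e₁pos.le) (div_nonneg (by linarith) e₀pos.le)
    · intro u₁ hu₁ u₂ hu₂ v hv
      obtain ⟨hγ0, hγ1⟩ := hγv v hv
      have hu₁' : |u₁| ≤ M := abs_le.mpr ⟨hu₁.1, hu₁.2⟩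
      have hu₂' : |u₂| ≤ M := abs_le.mpr ⟨hu₂.1, hu₂.2⟩
      by_cases heq : u₁ = u₂
      · subst heq
        simp only [sub_self, abs_zero]
        rw [Real.zero_rpow (ne_of_gt hγ0), mul_zero]
      · have hh : 0 < |u₁ - u₂| := abs_pos.mpr (sub_ne_zero.mpr heq)
        have hA₁ := hsummAbs v hv u₁ hu₁'
        have hA₂ := hsummAbs v hv u₂ hu₂'
        have hdrow : ∀ j : ℕ, Summable (fun k : ℤ =>
            |2 ^ (-(j:ℝ) * v) * ε j k * (Φ (2 ^ ((j:ℝ)) * u₁ - (k:ℝ)) v - Φ (-(k:ℝ)) v)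
              - 2 ^ (-(j:ℝ) * v) * ε j k *
                (Φ (2 ^ ((j:ℝ)) * u₂ - (k:ℝ)) v - Φ (-(k:ℝ)) v)|) := fun j =>
          Summable.of_nonneg_of_le (fun k => abs_nonneg _) (fun k => abs_sub _ _)
            (((key₁ v hv u₁ hu₁' j).1).add ((key₁ v hv u₂ hu₂' j).1))
        have hbound1 : ∀ j : ℕ,
            (∑' k : ℤ, |2 ^ (-(j:ℝ) * v) * ε j k *
              (Φ (2 ^ ((j:ℝ)) * u₁ - (k:ℝ)) v - Φ (-(k:ℝ)) v)
              - 2 ^ (-(j:ℝ) * v) * ε j k * (Φ (2 ^ ((j:ℝ)) * u₂ - (k:ℝ)) v - Φ (-(k:ℝ)) v)|)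
            ≤ 2 * D₁ * 2 ^ (-(j:ℝ) * (v - 1/α)) := by
          intro j
          have h₁ := key₁ v hv u₁ hu₁' j
          have h₂ := key₁ v hv u₂ hu₂' j
          calc (∑' k : ℤ, |2 ^ (-(j:ℝ) * v) * ε j k *
                (Φ (2 ^ ((j:ℝ)) * u₁ - (k:ℝ)) v - Φ (-(k:ℝ)) v)
                - 2 ^ (-(j:ℝ) * v) * ε j k * (Φ (2 ^ ((j:ℝ)) * u₂ - (k:ℝ)) v - Φ (-(k:ℝ)) v)|)
              ≤ ∑' k : ℤ, (|2 ^ (-(j:ℝ) * v) * ε j k *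
                  (Φ (2 ^ ((j:ℝ)) * u₁ - (k:ℝ)) v - Φ (-(k:ℝ)) v)|
                + |2 ^ (-(j:ℝ) * v) * ε j k *
                  (Φ (2 ^ ((j:ℝ)) * u₂ - (k:ℝ)) v - Φ (-(k:ℝ)) v)|) :=
                Summable.tsum_le_tsum (fun k => abs_sub _ _) (hdrow j) (h₁.1.add h₂.1)
            _ = (∑' k : ℤ, |2 ^ (-(j:ℝ) * v) * ε j k *
                  (Φ (2 ^ ((j:ℝ)) * u₁ - (k:ℝ)) v - Φ (-(k:ℝ)) v)|)
                + ∑' k : ℤ, |2 ^ (-(j:ℝ) * v) * ε j k *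
                  (Φ (2 ^ ((j:ℝ)) * u₂ - (k:ℝ)) v - Φ (-(k:ℝ)) v)| := Summable.tsum_add h₁.1 h₂.1
            _ ≤ D₁ * 2 ^ (-(j:ℝ) * (v - 1/α)) + D₁ * 2 ^ (-(j:ℝ) * (v - 1/α)) :=
                add_le_add h₁.2 h₂.2
            _ = 2 * D₁ * 2 ^ (-(j:ℝ) * (v - 1/α)) := by ring
        obtain ⟨hgsum, hgle⟩ := aux_holder_sum (γ := v - 1/α) (γ₀ := a - 1/α) (γ₁ := b - 1/α)
          hγ0 hγ1 hh hD₁0 hD₂0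
          (fun j => tsum_nonneg fun k => abs_nonneg _) hbound1
          (fun j hs => key₂ v hv u₁ u₂ hu₁' hu₂' j hs)
          (by linarith [hv.1]) (by linarith) (by linarith [hv.2]) (by linarith)
        unfold highFreqPart
        exact aux_assemble hA₁ hA₂ hdrow hgle
end
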